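/- Herbrand tree as a decision procedure for counter-examples: if `Htree Th t = true` and `val : atom → Bool` is any total valuation, then the index `i` obtained by descending `t` according to `val` (at node `Exp a t₁ t₂`, go to `t₁` if `val a = true`, else `t₂`, until reaching a leaf `Contrad i`) satisfies `eval val (Th i) = false`. -/
import Mathlib


inductive Compound (atom : Type) : Type where
  | Atomic : atom → Compound atom
  | And : Compound atom → Compound atom → Compound atom
  | Or : Compound atom → Compound atom → Compound atom
  | Not : Compound atom → Compound atom

variable {atom index : Type}

/-- Total Boolean evaluation of a compound. -/
def cEval (val : atom → Bool) : Compound atom → Bool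
  | .Atomic a => val a
  | .And c d => cEval val c && cEval val d
  | .Or c d => cEval val c || cEval val d
  | .Not c => !cEval val c

/-- A path is a finite partial Boolean valuation on atoms. -/
abbrev PPath (atom : Type) : Type := List (atom × Bool)

/-- Lookup of an atom in a path. -/
def findA [DecidableEq atom] (p : PPath atom) (a : atom) : Option Bool :=
  (p.find? (fun x => x.1 = a)).map Prod.snd

/-- Strict partial evaluation of a compound under a path. -/
def pEval [DecidableEq atom] (p : PPath atom) : Compound atom → Option Bool
  | .Atomic a => findA p a
  | .And c d =>
      match pEval p c, pEval p d with
      | some x, some y => some (x && y)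
      | _, _ => none
  | .Or c d =>
      match pEval p c, pEval p d with
      | some x, some y => some (x || y)
      | _, _ => none
  | .Not c => (pEval p c).map (fun b => !b)

/-- The list of atoms occurring in a compound. -/
def atomsOf : Compound atom → List atom
  | .Atomic a => [a]
  | .And c d => atomsOf c ++ atomsOf d
  | .Or c d => atomsOf c ++ atomsOf d
  | .Not c => atomsOf c

/-- Herbrand trees: leaves carry indices, nodes carry atoms. -/
inductive HTree (atom index : Type) : Type where
  | Contrad : index → HTree atom index
  | Exp : atom → HTree atom index → HTree atom index → HTree atom index

/-- Checker that `t` is a correct Herbrand tree relative to a starting path `p`. -/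
def HtreeAt [DecidableEq atom] (Th : index → Compound atom) (p : PPath atom) :
    HTree atom index → Bool
  | .Contrad i => pEval p (Th i) == some false
  | .Exp a t₁ t₂ =>
      (findA p a == none) && HtreeAt Th ((a, true) :: p) t₁
        && HtreeAt Th ((a, false) :: p) t₂

/-- Checker that `t` is a Herbrand tree for the theory `Th`. -/
def Htree [DecidableEq atom] (Th : index → Compound atom) (t : HTree atom index) : Bool :=
  HtreeAt Th [] t

/-- `q` extends `p` as a partial valuation. -/
def PathExtends [DecidableEq atom] (q p : PPath atom) : Prop :=
  ∀ a b, findA p a = some b → findA q a = some b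

/-- A total valuation `val` extends the path `p`. -/
def ValExtends [DecidableEq atom] (val : atom → Bool) (p : PPath atom) : Prop :=
  ∀ a b, findA p a = some b → val a = b

/-- The `good` predicate: reflects the existence of a Herbrand sub-tree below `p`. -/
inductive good [DecidableEq atom] (Th : index → Compound atom) : PPath atom → Prop where
  | good_leaf : ∀ p i, pEval p (Th i) = some false → good Th p
  | good_node : ∀ p a, findA p a = none → good Th ((a, true) :: p) →
      good Th ((a, false) :: p) → good Th p

/-- Descend a Herbrand tree following a total valuation. -/
def descend {atom index : Type} : HTree atom index → (atom → Bool) → index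
  | .Contrad i, _ => i
  | .Exp a t₁ t₂, val => if val a then descend t₁ val else descend t₂ val


theorem pEval_sound {atom : Type} [DecidableEq atom] (val : atom → Bool)
    (p : PPath atom) (hv : ValExtends val p) :
    ∀ c b, pEval p c = some b → cEval val c = b := by
  intro c
  induction c with
  | Atomic a => intro b h; exact hv a b h
  | And c d ihc ihd =>
      intro b h
      simp only [pEval] at h
      cases hc : pEval p c with
      | none => simp [hc] at h
      | some x =>
        cases hd : pEval p d with
        | none => simp [hc, hd] at h
        | some y =>
          simp [hc, hd] at h
          simp [cEval, ihc x hc, ihd y hd, ← h]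
  | Or c d ihc ihd =>
      intro b h
      simp only [pEval] at h
      cases hc : pEval p c with
      | none => simp [hc] at h
      | some x =>
        cases hd : pEval p d with
        | none => simp [hc, hd] at h
        | some y =>
          simp [hc, hd] at h
          simp [cEval, ihc x hc, ihd y hd, ← h]
  | Not c ihc =>
      intro b h
      simp only [pEval, Option.map_eq_some_iff] at h
      obtain ⟨x, hx, hb⟩ := h
      simp [cEval, ihc x hx, ← hb]

theorem findA_cons {atom : Type} [DecidableEq atom] (a x : atom) (b : Bool)
    (p : PPath atom) :
    findA ((a, b) :: p) x = if a = x then some b else findA p x := by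
  simp only [findA, List.find?]
  by_cases h : a = x <;> simp [h]

theorem valExtends_cons {atom : Type} [DecidableEq atom] {val : atom → Bool}
    {p : PPath atom} (hv : ValExtends val p) {a : atom} {b : Bool}
    (hab : val a = b) : ValExtends val ((a, b) :: p) := by
  intro x c hx
  rw [findA_cons] at hx
  split at hx
  · rename_i h; subst h; injection hx with h; rw [hab, h]
  · exact hv x c hx

theorem descend_aux {atom index : Type} [DecidableEq atom]
    (Th : index → Compound atom) (val : atom → Bool) :
    ∀ (t : HTree atom index) (p : PPath atom), HtreeAt Th p t = true →
      ValExtends val p → cEval val (Th (descend t val)) = false := by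
  intro t
  induction t with
  | Contrad i =>
      intro p h hv
      simp only [HtreeAt, beq_iff_eq] at h
      exact pEval_sound val p hv _ _ h
  | Exp a t₁ t₂ ih₁ ih₂ =>
      intro p h hv
      simp only [HtreeAt, Bool.and_eq_true, beq_iff_eq] at h
      obtain ⟨⟨hfa, h1⟩, h2⟩ := h
      by_cases hva : val a = true
      · simp only [descend, hva, if_true]
        exact ih₁ _ h1 (valExtends_cons hv hva)
      · simp only [descend, hva, if_false]
        exact ih₂ _ h2 (valExtends_cons hv (by simpa using hva))

/-- a Herbrand tree is a decision procedure for counter-examples. -/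
theorem descend_counterexample {atom index : Type} [DecidableEq atom]
    (Th : index → Compound atom) (t : HTree atom index)
    (ht : Htree Th t = true) (val : atom → Bool) :
    cEval val (Th (descend t val)) = false := by
  exact descend_aux Th val t [] ht (fun a b h => by simp [findA] at h)
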